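/- arXiv:1107.3444 — 3 statements merged into one kernel-verified Lean document; each statement's English description precedes it below -/
import Mathlib

section
/- Let G be a group, S and T sets, α : G → Sym(S) and β : G → Sym(T) group homomorphisms, and π : T → S a surjective map which is equivariant: π(β(g)(t)) = α(g)(π(t)) for all g ∈ G, t ∈ T. Assume that the action of G on S via α is transitive and that the image of β is an abelian subgroup of Sym(T). Fix s₀ ∈ S, let H = {g ∈ G : α(g)(s₀) = s₀} be the stabilizer of s₀, and let F = π⁻¹(s₀). Then: (a) for every h ∈ H the permutation β(h) maps F bijectively onto itself, so restriction to F defines a homomorphism ρ : H → Sym(F); (b) ker β ⊆ ker α, so there is a well-defined surjective homomorphism θ : im(β) → im(α) with θ(β(g)) = α(g) for all g ∈ G; (c) every element of ker θ = β(ker α) maps F onto itself, and the homomorphism ker θ → Sym(F) given by restriction to F is injective with image equal to im(ρ). In particular there is a short exact sequence 1 → im(ρ) → im(β) → im(α) → 1. -/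
/-! Surjectivity and equivariance of `π` give `ker β ≤ ker α`, so `α` factors through `β` and
`im α` is abelian. A permutation commuting with a family of permutations and fixing a set `F`
pointwise is trivial once the translates of `F` cover everything. Applied to `α` and `F = {s₀}`
this shows that the stabilizer `H` is `ker α`, whence `ker θ = β(H)`; applied to `β` and the fiber
`F = π⁻¹(s₀)`, whose translates cover `T` by transitivity, it shows that an element of `β(H)`
fixing `F` pointwise is trivial, i.e. restriction to the fiber is injective. -/

namespace Equiv.Perm

theorem eq_one_of_commute_of_forall_mem_fixed {ι T : Type*} (f : ι → Perm T) (F : Set T)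
    {x : Perm T} (hcomm : ∀ i, Commute x (f i)) (hfix : ∀ t ∈ F, x t = t)
    (hcover : ∀ t, ∃ i, ∃ u ∈ F, f i u = t) : x = 1 := by
  ext t
  obtain ⟨i, u, hu, rfl⟩ := hcover t
  rw [one_apply, ← mul_apply, (hcomm i).eq, mul_apply, hfix u hu]

end Equiv.Perm

namespace MonoidHom

variable {M G N T : Type*} [MulOneClass M] [Group G] [Group N]

def subtypePerm (φ : M →* Equiv.Perm T) (p : T → Prop) (h : ∀ m t, p (φ m t) ↔ p t) :
    M →* Equiv.Perm {t // p t} where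
  toFun m := (φ m).subtypePerm (h m)
  map_one' := by ext; simp
  map_mul' m m' := by ext t; exact DFunLike.congr_fun (map_mul φ m m') t.1

@[simp]
theorem subtypePerm_apply (φ : M →* Equiv.Perm T) (p : T → Prop) (h : ∀ m t, p (φ m t) ↔ p t)
    (m : M) (t : {t // p t}) : (φ.subtypePerm p h m t : T) = φ m t :=
  rfl

theorem range_subtypePerm_le {φ : G →* Equiv.Perm T} {ψ : N →* Equiv.Perm T} {p : T → Prop}
    (hφ : ∀ g t, p (φ g t) ↔ p t) (hψ : ∀ n t, p (ψ n t) ↔ p t) (hr : φ.range ≤ ψ.range) :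
    (φ.subtypePerm p hφ).range ≤ (ψ.subtypePerm p hψ).range := by
  rintro _ ⟨g, rfl⟩
  obtain ⟨n, hn⟩ := hr ⟨g, rfl⟩
  exact ⟨n, by ext t; simp [hn]⟩

theorem range_subtypePerm_eq {φ : G →* Equiv.Perm T} {ψ : N →* Equiv.Perm T} {p : T → Prop}
    (hφ : ∀ g t, p (φ g t) ↔ p t) (hψ : ∀ n t, p (ψ n t) ↔ p t) (hr : φ.range = ψ.range) :
    (φ.subtypePerm p hφ).range = (ψ.subtypePerm p hψ).range :=
  le_antisymm (range_subtypePerm_le hφ hψ hr.le) (range_subtypePerm_le hψ hφ hr.ge)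

variable {R : Type*} [Group R]

theorem ker_eq_map_ker_comp {q : G →* N} (hq : Function.Surjective q) (θ : N →* R) :
    θ.ker = (θ.comp q).ker.map q := by
  rw [← comap_ker, Subgroup.map_comap_eq_self_of_surjective hq]

variable {f : G →* N} {g : G →* R}

theorem commute_of_ker_le (hle : f.ker ≤ g.ker) {a b : G} (h : Commute (f a) (f b)) :
    Commute (g a) (g b) := by
  rw [← commutatorElement_eq_one_iff_commute, ← map_commutatorElement] at h ⊢
  exact hle h

noncomputable def rangeLift (hle : f.ker ≤ g.ker) : f.range →* g.range :=
  f.rangeRestrict.liftOfSurjective f.rangeRestrict_surjective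
    ⟨g.rangeRestrict, by simpa only [ker_rangeRestrict] using hle⟩

theorem rangeLift_comp_rangeRestrict (hle : f.ker ≤ g.ker) :
    (rangeLift hle).comp f.rangeRestrict = g.rangeRestrict :=
  f.rangeRestrict.liftOfRightInverse_comp _ _ _

theorem rangeLift_surjective (hle : f.ker ≤ g.ker) : Function.Surjective (rangeLift hle) := by
  refine .of_comp (g := f.rangeRestrict) ?_
  rw [← coe_comp, rangeLift_comp_rangeRestrict]
  exact g.rangeRestrict_surjective

theorem ker_rangeLift (hle : f.ker ≤ g.ker) : (rangeLift hle).ker = g.ker.map f.rangeRestrict := by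
  rw [ker_eq_map_ker_comp f.rangeRestrict_surjective, rangeLift_comp_rangeRestrict,
    ker_rangeRestrict]

end MonoidHom

section Monodromy

variable {G S T : Type*} [Group G] {α : G →* Equiv.Perm S} {β : G →* Equiv.Perm T} {π : T → S}

theorem apply_mem_fiber_iff (heq : ∀ g t, π (β g t) = α g (π t)) {s₀ : S} {g : G}
    (hg : α g s₀ = s₀) (t : T) : π (β g t) = s₀ ↔ π t = s₀ := by
  rw [heq]
  exact (α g).injective.eq_iff' hg

theorem ker_le_ker_of_equivariant (hπ : Function.Surjective π)
    (heq : ∀ g t, π (β g t) = α g (π t)) : β.ker ≤ α.ker := by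
  intro g hg
  ext s
  obtain ⟨t, rfl⟩ := hπ s
  rw [← heq, hg]
  rfl

theorem eq_one_of_apply_eq_self_of_commute (htrans : ∀ s s' : S, ∃ g : G, α g s = s')
    (hcomm : ∀ g g' : G, Commute (α g) (α g')) {s₀ : S} {g : G} (hg : α g s₀ = s₀) :
    α g = 1 :=
  Equiv.Perm.eq_one_of_commute_of_forall_mem_fixed α {s₀} (hcomm g)
    (by rintro _ rfl; exact hg) (fun s ↦ (htrans s₀ s).imp fun _ h ↦ ⟨s₀, rfl, h⟩)

theorem exists_apply_mem_fiber_eq (heq : ∀ g t, π (β g t) = α g (π t))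
    (htrans : ∀ s s' : S, ∃ g : G, α g s = s') (s₀ : S) (t : T) :
    ∃ g, ∃ u ∈ {u | π u = s₀}, β g u = t := by
  obtain ⟨g, hg⟩ := htrans s₀ (π t)
  refine ⟨g, β g⁻¹ t, ?_, by simp⟩
  show π (β g⁻¹ t) = s₀
  rw [heq, ← hg, map_inv]
  exact (α g).symm_apply_apply s₀

end Monodromy

/-- The group-theoretic exact sequence of monodromy groups: given a transitive action
`α : G → Sym S`, an action `β : G → Sym T` with abelian image, and a surjective
equivariant map `π : T → S`, with `H` the stabilizer of `s₀ ∈ S` and `F = π⁻¹(s₀)`: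
(a) every `β h`, `h ∈ H`, restricts to a permutation of `F`, giving `ρ : H → Sym F`;
(b) `ker β ⊆ ker α` and there is a surjective `θ : im β → im α` with `θ(β g) = α g`;
(c) `ker θ = β(ker α)`, its elements preserve `F`, and restriction to `F` gives an
injective homomorphism `ker θ → Sym F` with image `im ρ`. In particular there is a short
exact sequence `1 → im ρ → im β → im α → 1`. -/
theorem monodromy_exact_sequence {G S T : Type*} [Group G]
    (α : G →* Equiv.Perm S) (β : G →* Equiv.Perm T)
    (π : T → S) (hπ : Function.Surjective π)
    (heq : ∀ (g : G) (t : T), π (β g t) = α g (π t))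
    (htrans : ∀ s s' : S, ∃ g : G, α g s = s')
    (habel : ∀ g g' : G, β g * β g' = β g' * β g)
    (s₀ : S) (H : Subgroup G) (hH : ∀ g : G, g ∈ H ↔ α g s₀ = s₀) :
    -- (a) every `β h` with `h ∈ H` maps `F = π⁻¹(s₀)` into itself …
    (∀ g : G, α g s₀ = s₀ → ∀ t : T, π t = s₀ → π (β g t) = s₀) ∧
    -- (b) `ker β ⊆ ker α` …
    (∀ g : G, β g = 1 → α g = 1) ∧
    -- … so that restriction defines `ρ : H → Sym F`, and there is a well-defined
    -- surjective `θ : im β → im α` with `θ (β g) = α g`: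
    ∃ (ρ : H →* Equiv.Perm {t : T // π t = s₀}) (θ : β.range →* α.range),
      (∀ (h : H) (t : T) (ht : π t = s₀), ((ρ h ⟨t, ht⟩ : {t : T // π t = s₀}) : T) = β h t) ∧
      (∀ g : G, ((θ ⟨β g, ⟨g, rfl⟩⟩ : α.range) : Equiv.Perm S) = α g) ∧
      Function.Surjective θ ∧
      -- (c) `ker θ = β (ker α)` …
      (∀ x : β.range, x ∈ θ.ker ↔ ∃ g : G, α g = 1 ∧ β g = (x : Equiv.Perm T)) ∧
      -- … and restriction to `F` is an injective homomorphism `ker θ → Sym F`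
      -- whose image is `im ρ`:
      ∃ ι : θ.ker →* Equiv.Perm {t : T // π t = s₀},
        (∀ (x : θ.ker) (t : T) (ht : π t = s₀),
          ((ι x ⟨t, ht⟩ : {t : T // π t = s₀}) : T) = ((x : β.range) : Equiv.Perm T) t) ∧
        Function.Injective ι ∧ ι.range = ρ.range := by
  have hker := ker_le_ker_of_equivariant hπ heq
  have hHker : H = α.ker := by
    ext g
    rw [hH, MonoidHom.mem_ker]
    exact ⟨eq_one_of_apply_eq_self_of_commute htrans
      (fun g g' ↦ MonoidHom.commute_of_ker_le hker (habel g g')), fun hg ↦ by rw [hg]; rfl⟩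
  let θ := MonoidHom.rangeLift hker
  have hmem_ker : ∀ x, x ∈ θ.ker ↔ ∃ g : G, α g = 1 ∧ β g = (x : Equiv.Perm T) := by
    simp [θ, MonoidHom.ker_rangeLift, Subtype.ext_iff]
  let ρ := (β.comp H.subtype).subtypePerm (π · = s₀) fun h ↦ apply_mem_fiber_iff heq ((hH h).mp h.2)
  let ι := (β.range.subtype.comp θ.ker.subtype).subtypePerm (π · = s₀) fun x ↦ by
    obtain ⟨g, hg, hgx⟩ := (hmem_ker x).mp x.2
    simpa [← hgx] using apply_mem_fiber_iff heq (g := g) (by rw [hg]; rfl)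
  have hθ := MonoidHom.rangeLift_comp_rangeRestrict hker
  refine ⟨fun g hg t ↦ (apply_mem_fiber_iff heq hg t).mpr, fun _ hg ↦ hker hg, ρ, θ,
    fun _ _ _ ↦ rfl, fun g ↦ congrArg Subtype.val (DFunLike.congr_fun hθ g),
    MonoidHom.rangeLift_surjective hker, hmem_ker, ι, fun _ _ _ ↦ rfl, ?_, ?_⟩
  · refine (injective_iff_map_eq_one ι).mpr fun x hx ↦ Subtype.ext (Subtype.ext ?_)
    obtain ⟨g, hgx⟩ := x.1.2
    refine Equiv.Perm.eq_one_of_commute_of_forall_mem_fixed β {u | π u = s₀}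
      (fun g' ↦ hgx ▸ habel g g') (fun t ht ↦ congrArg Subtype.val
        (DFunLike.congr_fun hx (⟨t, ht⟩ : {t // π t = s₀})))
      (exists_apply_mem_fiber_eq heq htrans s₀)
  · refine MonoidHom.range_subtypePerm_eq _ _ ?_
    rw [MonoidHom.range_comp, MonoidHom.range_comp, Subgroup.range_subtype, Subgroup.range_subtype,
      MonoidHom.ker_rangeLift, Subgroup.map_map, β.subtype_comp_rangeRestrict, hHker]
end

section
/- Let G be a finitely generated abelian group, S and T sets, α : G → Sym(S) and β : G → Sym(T) group homomorphisms, and π : T → S a surjective equivariant map (π(β(g)(t)) = α(g)(π(t)) for all g, t). Assume the action of G on S via α is transitive. Fix s₀ ∈ S, let H = {g ∈ G : α(g)(s₀) = s₀} and F = π⁻¹(s₀); every β(h) with h ∈ H maps F bijectively to itself, giving a homomorphism ρ : H → Sym(F). Then rank(im β) ≤ rank(im α) + rank(im ρ). -/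
/-! The stabilizer `H` of `s₀` contains `ker α`, so `im β` is generated by the images of lifts
of generators of `im α` together with `β(H)`. Since `G` is abelian and acts transitively on `S`,
an element of `H` acting trivially on the fibre `π⁻¹(s₀)` acts trivially on every fibre, so `β`
restricted to `H` factors through `ρ` and `β(H)` needs no more generators than `im ρ`. -/

/-- The rank of a (finitely generated abelian) group: the smallest number `k` such that
the group can be generated by `k` elements (equivalently, for finitely generated abelian
groups, the smallest number of cyclic groups in a direct sum decomposition). -/
noncomputable def grpRank (G : Type*) [Group G] : ℕ :=
  sInf {n | ∃ g : Fin n → G, Subgroup.closure (Set.range g) = ⊤}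

open Subgroup

lemma grpRank_le {Q : Type*} [Group Q] {n : ℕ} (g : Fin n → Q)
    (hg : closure (Set.range g) = ⊤) : grpRank Q ≤ n :=
  Nat.sInf_le ⟨g, hg⟩

lemma exists_closure_eq_top_grpRank (Q : Type*) [Group Q] [Group.FG Q] :
    ∃ g : Fin (grpRank Q) → Q, closure (Set.range g) = ⊤ := by
  obtain ⟨S, -, hS⟩ := Group.rank_spec Q
  have hrange : Set.range (fun i => (S.equivFin.symm i : Q)) = (S : Set Q) := by
    ext q
    exact ⟨fun ⟨i, hi⟩ => hi ▸ (S.equivFin.symm i).2, fun hq => ⟨S.equivFin ⟨q, hq⟩, by simp⟩⟩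
  have hne : {n | ∃ g : Fin n → Q, closure (Set.range g) = ⊤}.Nonempty :=
    ⟨S.card, fun i => S.equivFin.symm i, hrange ▸ hS⟩
  exact Nat.sInf_mem hne

lemma CommGroup.subgroup_fg {G : Type*} [CommGroup G] [Group.FG G] (H : Subgroup G) :
    Group.FG H := by
  rw [Group.fg_iff_subgroup_fg, fg_iff_add_fg]
  have : Module.Finite ℤ (Additive G) := Module.Finite.iff_addGroup_fg.mpr inferInstance
  have hfg : (AddSubgroup.toIntSubmodule H.toAddSubgroup).FG := IsNoetherian.noetherian _
  simpa using (Submodule.fg_iff_addSubgroup_fg _).mp hfg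

lemma MonoidHom.map_eq_one_of_forall_fixed_of_cover {G T : Type*} [CommGroup G]
    (β : G →* Equiv.Perm T) (F : Set T) (hcover : ∀ t, ∃ a, β a t ∈ F) {g : G}
    (hg : ∀ t ∈ F, β g t = t) : β g = 1 := by
  ext t
  obtain ⟨a, ha⟩ := hcover t
  have hcomm : β a (β g t) = β g (β a t) := by
    rw [← Equiv.Perm.mul_apply, ← Equiv.Perm.mul_apply, ← map_mul, ← map_mul, mul_comm]
  exact (β a).injective (hcomm.trans (hg _ ha))

namespace MonoidHom

variable {G P A : Type*} [Group G] [Group P] [Group A]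

lemma grpRank_range_le {n : ℕ} (f : G →* P) (x : Fin n → G)
    (hx : f.range ≤ closure (Set.range (f ∘ x))) : grpRank f.range ≤ n := by
  refine grpRank_le (fun i => f.rangeRestrict (x i)) (map_injective f.range.subtype_injective ?_)
  rw [MonoidHom.map_closure, ← Set.range_comp, ← MonoidHom.range_eq_map, range_subtype]
  exact le_antisymm ((closure_le _).mpr (Set.range_subset_iff.mpr fun i => ⟨x i, rfl⟩)) hx

lemma exists_lift_closure_grpRank (f : G →* P) [Group.FG f.range] :
    ∃ x : Fin (grpRank f.range) → G, ∀ g, ∃ g' ∈ closure (Set.range x), f g' = f g := by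
  obtain ⟨gens, hgens⟩ := exists_closure_eq_top_grpRank f.range
  choose x hx using fun i => (gens i).2
  have hlift : f.rangeRestrict ∘ x = gens := funext fun i => Subtype.ext (hx i)
  have hmap : (closure (Set.range x)).map f.rangeRestrict = ⊤ := by
    rw [MonoidHom.map_closure, ← Set.range_comp, hlift, hgens]
  refine ⟨x, fun g => ?_⟩
  obtain ⟨g', hg', hfg'⟩ := hmap.ge (mem_top (f.rangeRestrict g))
  exact ⟨g', hg', congrArg Subtype.val hfg'⟩

lemma map_mem_closure_range_comp (f : G →* P) {ι : Type*} {x : ι → G} {g : G}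
    (hg : g ∈ closure (Set.range x)) : f g ∈ closure (Set.range (f ∘ x)) := by
  rw [Set.range_comp, ← MonoidHom.map_closure]
  exact mem_map_of_mem f hg

lemma grpRank_range_le_of_ker_le (f : G →* P) (g : G →* A) [Group.FG g.range]
    (hker : g.ker ≤ f.ker) : grpRank f.range ≤ grpRank g.range := by
  obtain ⟨x, hx⟩ := g.exists_lift_closure_grpRank
  refine f.grpRank_range_le x ?_
  rintro _ ⟨a, rfl⟩
  obtain ⟨a', ha', hga'⟩ := hx a
  have hfa' : f a' = f a := f.eq_iff.mpr (hker (g.eq_iff.mp hga'))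
  exact hfa' ▸ f.map_mem_closure_range_comp ha'

lemma grpRank_range_le_add (β : G →* P) (α : G →* A) (H : Subgroup G) (hH : α.ker ≤ H)
    [Group.FG α.range] [Group.FG (β.comp H.subtype).range] :
    grpRank β.range ≤ grpRank α.range + grpRank (β.comp H.subtype).range := by
  obtain ⟨x, hx⟩ := α.exists_lift_closure_grpRank
  obtain ⟨y, hy⟩ := (β.comp H.subtype).exists_lift_closure_grpRank
  set z := Fin.append x (H.subtype ∘ y)
  have hxz : Set.range x ⊆ Set.range z :=
    Set.range_subset_iff.mpr fun i => ⟨Fin.castAdd _ i, Fin.append_left _ _ i⟩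
  have hyz : Set.range (H.subtype ∘ y) ⊆ Set.range z :=
    Set.range_subset_iff.mpr fun j => ⟨Fin.natAdd _ j, Fin.append_right _ _ j⟩
  refine β.grpRank_range_le z ?_
  rintro _ ⟨g, rfl⟩
  obtain ⟨g', hg', hαg'⟩ := hx g
  have hk : g'⁻¹ * g ∈ H := hH (α.eq_iff.mp hαg'.symm)
  obtain ⟨h', hh', hβh'⟩ := hy ⟨g'⁻¹ * g, hk⟩
  have hβg : β g = β (g' * h') := by
    rw [map_mul, show β h' = β (g'⁻¹ * g) from hβh', ← map_mul, mul_inv_cancel_left]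
  rw [hβg]
  exact β.map_mem_closure_range_comp
    (mul_mem (closure_mono hxz hg') (closure_mono hyz (H.subtype.map_mem_closure_range_comp hh')))

end MonoidHom

theorem rank_image_le_general {G S T : Type*} [CommGroup G] [Group.FG G]
    (α : G →* Equiv.Perm S) (β : G →* Equiv.Perm T)
    (π : T → S)
    (heq : ∀ (g : G) (t : T), π (β g t) = α g (π t))
    (htrans : ∀ s s' : S, ∃ g : G, α g s = s')
    (s₀ : S) (H : Subgroup G) (hH : ∀ g : G, g ∈ H ↔ α g s₀ = s₀)
    (ρ : H →* Equiv.Perm {t : T // π t = s₀})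
    (hρ : ∀ (h : H) (t : T) (ht : π t = s₀),
      ((ρ h ⟨t, ht⟩ : {t : T // π t = s₀}) : T) = β h t) :
    grpRank β.range ≤ grpRank α.range + grpRank ρ.range := by
  have : Group.FG H := CommGroup.subgroup_fg H
  have hkerα : α.ker ≤ H := fun g hg => (hH g).mpr (by rw [(MonoidHom.mem_ker).mp hg]; rfl)
  have hcover : ∀ t, ∃ a, β a t ∈ {t | π t = s₀} := fun t =>
    (htrans (π t) s₀).imp fun a ha => (heq a t).trans ha
  have hkerρ : ρ.ker ≤ (β.comp H.subtype).ker := fun h hh =>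
    β.map_eq_one_of_forall_fixed_of_cover _ hcover fun t ht => by
      change β h t = t
      rw [← hρ h t ht, (MonoidHom.mem_ker).mp hh]; rfl
  calc grpRank β.range ≤ grpRank α.range + grpRank (β.comp H.subtype).range :=
        β.grpRank_range_le_add α H hkerα
    _ ≤ grpRank α.range + grpRank ρ.range :=
        Nat.add_le_add_left ((β.comp H.subtype).grpRank_range_le_of_ker_le ρ hkerρ) _

/-- For a finitely generated abelian group `G`, a transitive action `α : G → Sym S`, an
action `β : G → Sym T`, and a surjective equivariant map `π : T → S`, with `H` the
stabilizer of `s₀` and `ρ : H → Sym F` the restriction of `β` to `F = π⁻¹(s₀)`: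
`rank (im β) ≤ rank (im α) + rank (im ρ)`. -/
theorem rank_image_le {G S T : Type*} [CommGroup G] [Group.FG G]
    (α : G →* Equiv.Perm S) (β : G →* Equiv.Perm T)
    (π : T → S) (hπ : Function.Surjective π)
    (heq : ∀ (g : G) (t : T), π (β g t) = α g (π t))
    (htrans : ∀ s s' : S, ∃ g : G, α g s = s')
    (s₀ : S) (H : Subgroup G) (hH : ∀ g : G, g ∈ H ↔ α g s₀ = s₀)
    (ρ : H →* Equiv.Perm {t : T // π t = s₀})
    (hρ : ∀ (h : H) (t : T) (ht : π t = s₀),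
      ((ρ h ⟨t, ht⟩ : {t : T // π t = s₀}) : T) = β h t) :
    grpRank β.range ≤ grpRank α.range + grpRank ρ.range :=
  rank_image_le_general α β π heq htrans s₀ H hH ρ hρ
end

section
/- Let Γ be a group and let M : ℤⁿ → Γ be a group homomorphism whose image (a finitely generated abelian group) has rank k. Then there exist a surjective group homomorphism p : ℤⁿ → ℤᵏ and a group homomorphism M' : ℤᵏ → Γ such that M = M' ∘ p. -/
/-- The rank of a (finitely generated) abelian group: the smallest number `k` such that
the group can be generated by `k` elements (equivalently, for finitely generated abelian
groups, the smallest number of cyclic groups in a direct sum decomposition). -/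
noncomputable def addRank (G : Type*) [AddGroup G] : ℕ :=
  sInf {n | ∃ g : Fin n → G, AddSubgroup.closure (Set.range g) = ⊤}

/-!
Let `A` be the image of `M` and `k` its rank. Choose a surjection `q : ℤᵏ → A` and, `ℤⁿ` being
projective, lift `M` along `q` to `p₀ : ℤⁿ → ℤᵏ`. The image `P` of `p₀` is a free group of rank
at most `k`, and `q` maps it onto `A`, so `A` is generated by `rank P` elements; minimality of `k`
forces `rank P = k`. Hence `P ≅ ℤᵏ` and `M` factors as `ℤⁿ ↠ P ≅ ℤᵏ → A`.
-/

open Module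

theorem exists_closure_range_eq_top_of_addRank {G : Type*} [AddGroup G] {m : ℕ} {g : Fin m → G}
    (hg : AddSubgroup.closure (Set.range g) = ⊤) :
    ∃ g : Fin (addRank G) → G, AddSubgroup.closure (Set.range g) = ⊤ :=
  Nat.sInf_mem (s := {n | ∃ g : Fin n → G, AddSubgroup.closure (Set.range g) = ⊤})
    ⟨m, g, hg⟩

theorem closure_range_comp_basis_eq_top {ι L G : Type*} [AddCommGroup L] [AddGroup G]
    (b : Basis ι ℤ L) {g : L →+ G} (hg : Function.Surjective g) :
    AddSubgroup.closure (Set.range (g ∘ b)) = ⊤ := by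
  have hb : AddSubgroup.closure (Set.range b) = ⊤ := by
    rw [← Submodule.span_int_eq_addSubgroupClosure, b.span_eq, Submodule.top_toAddSubgroup]
  rw [Set.range_comp, ← AddMonoidHom.map_closure, hb, AddSubgroup.map_top_of_surjective g hg]

section

variable {L : Type*} [AddCommGroup L] [Module.Free ℤ L] [Module.Finite ℤ L]

theorem addRank_le_finrank_of_surjective {G : Type*} [AddGroup G] {g : L →+ G}
    (hg : Function.Surjective g) : addRank G ≤ finrank ℤ L :=
  Nat.sInf_le ⟨g ∘ finBasis ℤ L, closure_range_comp_basis_eq_top _ hg⟩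

variable {A : Type*} [AddCommGroup A]

theorem exists_linearMap_fin_addRank_surjective {f : L →+ A} (hf : Function.Surjective f) :
    ∃ q : (Fin (addRank A) → ℤ) →ₗ[ℤ] A, Function.Surjective q := by
  obtain ⟨g, hg⟩ :=
    exists_closure_range_eq_top_of_addRank (closure_range_comp_basis_eq_top (finBasis ℤ L) hf)
  refine ⟨Fintype.linearCombination ℤ g, ?_⟩
  rw [← span_range_eq_top_iff_surjective_fintypeLinearCombination]
  exact Submodule.toAddSubgroup_injective <| by
    rw [Submodule.span_int_eq_addSubgroupClosure, hg, Submodule.top_toAddSubgroup]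

theorem exists_surjective_factorization_through_fin_addRank {f : L →ₗ[ℤ] A}
    (hf : Function.Surjective f) :
    ∃ (p : L →ₗ[ℤ] (Fin (addRank A) → ℤ)) (g : (Fin (addRank A) → ℤ) →ₗ[ℤ] A),
      Function.Surjective p ∧ f = g ∘ₗ p := by
  obtain ⟨q, hq⟩ := exists_linearMap_fin_addRank_surjective (f := f.toAddMonoidHom) hf
  obtain ⟨p₀, rfl⟩ := Module.projective_lifting_property q f hq
  set P := LinearMap.range p₀
  have hqP : Function.Surjective (q ∘ₗ P.subtype) := by
    intro a
    obtain ⟨x, rfl⟩ := hf a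
    exact ⟨⟨p₀ x, x, rfl⟩, rfl⟩
  have hP : finrank ℤ P = addRank A :=
    le_antisymm (by simpa using P.finrank_le)
      (addRank_le_finrank_of_surjective (g := (q ∘ₗ P.subtype).toAddMonoidHom) hqP)
  let e := (finBasisOfFinrankEq ℤ P hP).equivFun
  refine ⟨e ∘ₗ p₀.rangeRestrict, q ∘ₗ P.subtype ∘ₗ e.symm,
    e.surjective.comp p₀.surjective_rangeRestrict, ?_⟩
  ext x
  simp

end

-- The scoped instance turns the commutativity of `M.range` into an `AddCommGroup` structure.
open scoped IsMulCommutative in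
/-- If `M : ℤⁿ → Γ` is a homomorphism whose image has rank `k`, then `M` factors as
`M = M' ∘ p` for some surjective homomorphism `p : ℤⁿ → ℤᵏ` and some homomorphism
`M' : ℤᵏ → Γ`. -/
theorem factors_through_zk {Γ : Type*} [Group Γ] (n k : ℕ)
    (M : (Fin n → ℤ) →+ Additive Γ) (hk : addRank M.range = k) :
    ∃ (p : (Fin n → ℤ) →+ (Fin k → ℤ)) (M' : (Fin k → ℤ) →+ Additive Γ),
      Function.Surjective p ∧ M = M'.comp p := by
  subst hk
  obtain ⟨p, g, hp, hfac⟩ :=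
    exists_surjective_factorization_through_fin_addRank (f := M.rangeRestrict.toIntLinearMap)
      M.rangeRestrict_surjective
  refine ⟨p.toAddMonoidHom, M.range.subtype.comp g.toAddMonoidHom, hp, ?_⟩
  ext x
  simpa using congrArg Subtype.val (LinearMap.congr_fun hfac x)
end
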